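/- Let r be a weakly transitive relation on a set W and let V : ι → Set W be a valuation indexed by an arbitrary type ι. Then there exist a set W', a relation r' on W' that is weakly transitive and irreflexive, a valuation V' : ι → Set W', and a surjective map π : W' → W such that: (i) for all x, y ∈ W', r' x y implies r (π x) (π y); (ii) for all x ∈ W' and v ∈ W, if r (π x) v then there exists y ∈ W' with r' x y and π y = v; and (iii) V' i = π ⁻¹' (V i) for every i. Moreover, if W is finite then W' can be chosen finite. -/

import Mathlib

/-!
Keep one copy of every irreflexive point of `W`, take two copies of every reflexive one, and relate
two distinct points when their images are related. A loop `r w w` is replaced by the edges between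
the two copies of `w`, so the back condition survives the removal of the diagonal; and two distinct
points of one fibre lie over a reflexive point, which is exactly what weak transitivity needs when
`w r s r t` returns to the image of `w`.
-/

universe u v

open Function

def WeaklyTransitive {α : Type*} (r : α → α → Prop) : Prop :=
  ∀ w s t, r w s → r s t → w = t ∨ r w t

section PullbackOffDiag

variable {W W' : Type*} (r : W → W → Prop) (π : W' → W)

def pullbackOffDiag (x y : W') : Prop :=
  r (π x) (π y) ∧ x ≠ y

theorem pullbackOffDiag_irrefl (x : W') : ¬ pullbackOffDiag r π x x :=
  fun h => h.2 rfl

theorem weaklyTransitive_pullbackOffDiag (hr : WeaklyTransitive r)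
    (hπ : ∀ x y, π x = π y → x = y ∨ r (π x) (π x)) :
    WeaklyTransitive (pullbackOffDiag r π) := by
  rintro w s t ⟨hws, -⟩ ⟨hst, -⟩
  by_cases hwt : w = t
  · exact Or.inl hwt
  refine Or.inr ⟨?_, hwt⟩
  rcases hr _ _ _ hws hst with hπwt | hπwt
  · rw [← hπwt]
    exact (hπ w t hπwt).resolve_left hwt
  · exact hπwt

theorem exists_pullbackOffDiag_of_rel (hsurj : Surjective π)
    (hπ : ∀ x, r (π x) (π x) → ∃ y ≠ x, π y = π x) {x : W'} {v : W} (hv : r (π x) v) :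
    ∃ y, pullbackOffDiag r π x y ∧ π y = v := by
  by_cases hvx : v = π x
  · subst hvx
    obtain ⟨y, hyx, hy⟩ := hπ x hv
    exact ⟨y, ⟨hy ▸ hv, hyx.symm⟩, hy⟩
  · obtain ⟨y, rfl⟩ := hsurj v
    exact ⟨y, ⟨hv, fun hxy => hvx (hxy ▸ rfl)⟩, rfl⟩

end PullbackOffDiag

section ReflDouble

variable {W : Type u} (r : W → W → Prop)

def ReflDouble : Type u :=
  {p : W × Bool // p.2 → r p.1 p.1}

instance [Finite W] : Finite (ReflDouble r) :=
  Subtype.finite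

namespace ReflDouble

def proj (x : ReflDouble r) : W :=
  x.1.1

theorem proj_surjective : Surjective (proj r) :=
  fun w => ⟨⟨(w, false), nofun⟩, rfl⟩

theorem eq_or_rel_of_proj_eq {x y : ReflDouble r} (h : proj r x = proj r y) :
    x = y ∨ r (proj r x) (proj r x) := by
  obtain ⟨⟨w, b⟩, hb⟩ := x
  obtain ⟨⟨w', b'⟩, hb'⟩ := y
  obtain rfl : w = w' := h
  by_cases hbb' : b = b'
  · exact Or.inl (by subst hbb'; rfl)
  · cases b <;> cases b' <;> simp_all [proj]

theorem exists_ne_proj_eq (x : ReflDouble r) (hx : r (proj r x) (proj r x)) :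
    ∃ y ≠ x, proj r y = proj r x :=
  ⟨⟨(x.1.1, !x.1.2), fun _ => hx⟩, fun h => by simpa using congrArg (·.1.2) h, rfl⟩

end ReflDouble

end ReflDouble

theorem irreflexive_unraveling {W : Type u} {ι : Type v} (r : W → W → Prop)
    (hwt : ∀ w s t : W, r w s → r s t → w = t ∨ r w t)
    (V : ι → Set W) :
    ∃ (W' : Type u) (r' : W' → W' → Prop) (V' : ι → Set W') (π : W' → W),
      (∀ w s t : W', r' w s → r' s t → w = t ∨ r' w t) ∧
      (∀ w : W', ¬ r' w w) ∧
      Function.Surjective π ∧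
      (∀ x y : W', r' x y → r (π x) (π y)) ∧
      (∀ (x : W') (v : W), r (π x) v → ∃ y : W', r' x y ∧ π y = v) ∧
      (∀ i : ι, V' i = π ⁻¹' (V i)) ∧
      (Finite W → Finite W') :=
  ⟨ReflDouble r, pullbackOffDiag r (ReflDouble.proj r), fun i => ReflDouble.proj r ⁻¹' V i,
    ReflDouble.proj r,
    weaklyTransitive_pullbackOffDiag r _ hwt fun _ _ => ReflDouble.eq_or_rel_of_proj_eq r,
    pullbackOffDiag_irrefl r _,
    ReflDouble.proj_surjective r,
    fun _ _ h => h.1,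
    fun _ _ => exists_pullbackOffDiag_of_rel r _ (ReflDouble.proj_surjective r)
      (ReflDouble.exists_ne_proj_eq r),
    fun _ => rfl,
    fun _ => inferInstance⟩
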